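/- For p ≥ −1 one has [S_p, L] = 0, so the flows ∂Φ/∂s_p = −(S_p)₋Φ, ∂Φ̂/∂s_p = (S_p)₊Φ̂ are consistent with the constraint Φ∂ⁿΦ⁻¹ = Φ̂∂⁻¹Φ̂⁻¹ = L, and they induce on L the equations ∂L/∂s_p = [−(S_p)₋, L] = [(S_p)₊, L]. Moreover, these reduced flows satisfy, for all k ≥ 1 and p, q ≥ −1: (i) [∂/∂t_k, ∂/∂s_p] L = 0; (ii) [∂/∂s_p, ∂/∂s_q] L = (q − p) ∂L/∂s_{p+q} (the Virasoro commutation relations). -/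

import Mathlib

/-!
Dressing by `Φ` and `Φ̂` turns `[∂, Ξ] = [∂, x] = 1` into `[P, M] = [L⁻¹, M̂] = 1`, where `L = Pⁿ`.
Consequently `S_p = A_p + B_p`, with `A_p = (1/n) M P^{np+1}` and `B_p = M̂ L^{p-1}`, satisfies
`[A_p, L] = -L^{p+1} = -[B_p, L]`, and the two halves obey Virasoro relations of opposite signs,
`[A_p, A_q] = (p - q) A_{p+q}` and `[B_p, B_q] = (q - p) B_{p+q}`.

A derivation `d` with `dΦ = gΦ` and `dΦ̂ = hΦ̂` acts on `Φ`-dressed operators as `ad g` and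
on `Φ̂`-dressed ones as `ad h`, up to the dressed image of its action on `∂`, `Ξ`, `x`; hence every
flow takes the Lax form `dL = [X₊, L]`. For two such flows
`d₁d₂L - d₂d₁L = [(d₁X₂ - d₂X₁)₊ - [(X₁)₊, (X₂)₊], L]`, and since `( )₊` and `( )₋` project onto
complementary subrings, the projected term is `[(X₁)₊, (X₂)₊]` for the pair `(t_k, s_p)` and
`(q - p) (S_{p+q})₊ + [(S_p)₊, (S_q)₊]` for the pair `(s_p, s_q)`.
-/

section

attribute [local instance] LieRing.ofAssociativeRing

section Derivation

variable {D : Type*} [Ring D]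

structure IsDerivation (d : D → D) : Prop where
  map_add : ∀ x y, d (x + y) = d x + d y
  map_mul : ∀ x y, d (x * y) = d x * y + x * d y

namespace IsDerivation

variable {d : D → D} (hd : IsDerivation d)
include hd

def toAddMonoidHom : D →+ D := AddMonoidHom.mk' d hd.map_add

lemma map_sub (x y : D) : d (x - y) = d x - d y := hd.toAddMonoidHom.map_sub x y

lemma map_one : d 1 = 0 := by
  simpa using hd.map_mul 1 1

lemma map_rat_smul [Algebra ℚ D] (c : ℚ) (x : D) : d (c • x) = c • d x :=
  _root_.map_rat_smul hd.toAddMonoidHom c x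

lemma map_lie (x y : D) : d ⁅x, y⁆ = ⁅d x, y⁆ + ⁅x, d y⁆ := by
  simp only [Ring.lie_def, hd.map_sub, hd.map_mul]
  abel

lemma map_units_inv (u : Dˣ) : d ↑u⁻¹ = -(↑u⁻¹ * d u * ↑u⁻¹) := by
  have h := hd.map_mul ↑u⁻¹ u
  rw [Units.inv_mul, hd.map_one, eq_comm, add_eq_zero_iff_eq_neg] at h
  rw [← neg_mul, ← h, mul_assoc, Units.mul_inv, mul_one]

lemma map_zpow {u : Dˣ} (hu : Commute (d u) u) (m : ℤ) :
    d ↑(u ^ m) = m • (d u * ↑(u ^ (m - 1))) := by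
  have step : ∀ m : ℤ, d ↑(u ^ (m + 1)) = d ↑(u ^ m) * u + d u * ↑(u ^ m) := fun m => by
    rw [zpow_add_one, Units.val_mul, hd.map_mul, (hu.units_zpow_right m).eq]
  induction m using Int.induction_on with
  | zero => simp [hd.map_one]
  | succ m ih =>
    rw [step, ih, smul_mul_assoc, mul_assoc, ← Units.val_mul, ← zpow_add_one, sub_add_cancel,
      add_sub_cancel_right, add_smul, one_smul]
  | pred m ih =>
    have h := step (-(m : ℤ) - 1)
    rw [sub_add_cancel, ih, eq_comm, ← eq_sub_iff_add_eq] at h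
    rw [← Units.mul_inv_cancel_right (d ↑(u ^ (-(m : ℤ) - 1))) u, h, sub_smul, one_smul,
      sub_mul, smul_mul_assoc, mul_assoc, ← Units.val_mul, ← zpow_neg_one, ← zpow_add]
    simp only [sub_eq_add_neg]

lemma map_zpow_eq_zero {u : Dˣ} (hu : d u = 0) (m : ℤ) : d ↑(u ^ m) = 0 := by
  rw [hd.map_zpow (hu ▸ Commute.zero_left _) m, hu, zero_mul, smul_zero]

lemma map_conj {Ψ : Dˣ} {g c x : D} (hΨ : d Ψ = g * Ψ) (hx : d x = ⁅c, x⁆) :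
    d (Ψ * x * ↑Ψ⁻¹) = ⁅g + Ψ * c * ↑Ψ⁻¹, Ψ * x * ↑Ψ⁻¹⁆ := by
  have hinv : d ↑Ψ⁻¹ = -(↑Ψ⁻¹ * g) := by
    rw [hd.map_units_inv, hΨ, mul_assoc, mul_assoc, Units.mul_inv, mul_one]
  rw [hd.map_mul, hd.map_mul, hΨ, hinv, hx]
  simp only [Ring.lie_def, add_mul, mul_add, mul_assoc, Units.inv_mul_cancel_left]
  noncomm_ring

lemma map_mul_of_eq_lie {g x y : D} (hx : d x = ⁅g, x⁆) (hy : d y = ⁅g, y⁆) :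
    d (x * y) = ⁅g, x * y⁆ := by
  rw [hd.map_mul, hx, hy]
  simp only [Ring.lie_def]
  noncomm_ring

lemma map_conj_zpow {Ψ u : Dˣ} {g c : D} (hΨ : d Ψ = g * Ψ) (hu : d u = 0) (hc : Commute c u)
    (m : ℤ) : d ↑((Ψ * u * Ψ⁻¹) ^ m) = ⁅g + Ψ * c * ↑Ψ⁻¹, ↑((Ψ * u * Ψ⁻¹) ^ m)⁆ := by
  rw [conj_zpow, Units.val_mul, Units.val_mul]
  exact hd.map_conj hΨ (by rw [hd.map_zpow_eq_zero hu, (hc.units_zpow_right m).lie_eq])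

lemma commutator_apply_of_lax {pos : D → D} (hpos : ∀ x y, pos (x - y) = pos x - pos y)
    {d' : D → D} (hd' : IsDerivation d') (hdpos : ∀ x, d (pos x) = pos (d x))
    (hd'pos : ∀ x, d' (pos x) = pos (d' x)) {L X X' : D} (hL : d L = ⁅pos X, L⁆)
    (hL' : d' L = ⁅pos X', L⁆) :
    d (d' L) - d' (d L) = ⁅pos (d X' - d' X) - ⁅pos X, pos X'⁆, L⁆ := by
  rw [hL', hL, hd.map_lie, hd'.map_lie, hdpos, hd'pos, hL, hL', hpos, sub_lie, sub_lie,
    leibniz_lie (pos X)]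
  abel

end IsDerivation

lemma IsDerivation.lie_right (x : D) : IsDerivation (⁅·, x⁆) where
  map_add y z := add_lie y z x
  map_mul y z := by simp only [Ring.lie_def]; noncomm_ring

lemma lie_zpow_of_lie_eq_one {u : Dˣ} {x : D} (h : ⁅(u : D), x⁆ = 1) (m : ℤ) :
    ⁅(↑(u ^ m) : D), x⁆ = m • ↑(u ^ (m - 1)) := by
  rw [(IsDerivation.lie_right x).map_zpow (h ▸ Commute.one_left _) m, h, one_mul]

lemma lie_conj (Ψ : Dˣ) (x y : D) :
    ⁅Ψ * x * ↑Ψ⁻¹, Ψ * y * ↑Ψ⁻¹⁆ = Ψ * ⁅x, y⁆ * ↑Ψ⁻¹ := by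
  simp only [Ring.lie_def, mul_sub, sub_mul, mul_assoc, Units.inv_mul_cancel_left]

lemma lie_conj_eq_one {u : Dˣ} {x : D} (h : ⁅(u : D), x⁆ = 1) (Ψ : Dˣ) :
    ⁅(↑(Ψ * u * Ψ⁻¹) : D), Ψ * x * ↑Ψ⁻¹⁆ = 1 := by
  rw [Units.val_mul, Units.val_mul, lie_conj, h, mul_one, Units.mul_inv]

lemma mul_zpow_lie_zpow {u : Dˣ} {x : D} (h : ⁅(u : D), x⁆ = 1) (α γ : ℤ) :
    ⁅x * ↑(u ^ α), (↑(u ^ γ) : D)⁆ = -(γ • (↑(u ^ (α + γ - 1)) : D)) := by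
  have hcomm : (↑(u ^ α) : D) * ↑(u ^ γ) = ↑(u ^ γ) * ↑(u ^ α) :=
    ((Commute.refl u).zpow_zpow α γ).units_val
  calc ⁅x * ↑(u ^ α), ↑(u ^ γ)⁆ = -(⁅(↑(u ^ γ) : D), x⁆ * ↑(u ^ α)) := by
        simp only [Ring.lie_def, mul_assoc, hcomm]; noncomm_ring
    _ = -(γ • ↑(u ^ (α + γ - 1))) := by
        rw [lie_zpow_of_lie_eq_one h, smul_mul_assoc, ← Units.val_mul, ← zpow_add,
          show γ - 1 + α = α + γ - 1 by ring]

lemma mul_zpow_lie_mul_zpow {u : Dˣ} {x : D} (h : ⁅(u : D), x⁆ = 1) (α β : ℤ) :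
    ⁅x * ↑(u ^ α), x * ↑(u ^ β)⁆ = (α - β) • (x * ↑(u ^ (α + β - 1))) := by
  have hswap : ∀ m : ℤ, (↑(u ^ m) : D) * x = x * ↑(u ^ m) + m • ↑(u ^ (m - 1)) := fun m => by
    rw [← lie_zpow_of_lie_eq_one h, Ring.lie_def]; abel
  calc ⁅x * ↑(u ^ α), x * ↑(u ^ β)⁆
      = x * ((↑(u ^ α) : D) * x) * ↑(u ^ β) - x * ((↑(u ^ β) : D) * x) * ↑(u ^ α) := by
        simp only [Ring.lie_def, mul_assoc]
    _ = (α - β) • (x * ↑(u ^ (α + β - 1))) := by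
        simp only [hswap, mul_add, add_mul, mul_smul_comm, smul_mul_assoc, mul_assoc,
          ← Units.val_mul, ← zpow_add]
        rw [sub_add_eq_add_sub, add_comm β α, show β - 1 + α = α + β - 1 by ring, sub_smul,
          add_sub_add_left_eq_sub]

end Derivation

section Virasoro

variable {D : Type*} [Ring D]

-- `S_p = orlovTerm n P M p + hatOrlovTerm L M̂ p`
def hatOrlovTerm (L : Dˣ) (Mh : D) (p : ℤ) : D := Mh * ↑(L ^ (p - 1))

variable {n : ℕ} {P L : Dˣ} {M Mh : D}

lemma hatOrlovTerm_eq (p : ℤ) : hatOrlovTerm L Mh p = Mh * ↑(L⁻¹ ^ (1 - p)) := by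
  rw [hatOrlovTerm, inv_zpow', neg_sub]

lemma hatOrlovTerm_lie_hatOrlovTerm (hLMh : ⁅((L⁻¹ : Dˣ) : D), Mh⁆ = 1) (p q : ℤ) :
    ⁅hatOrlovTerm L Mh p, hatOrlovTerm L Mh q⁆ = (q - p) • hatOrlovTerm L Mh (p + q) := by
  rw [hatOrlovTerm_eq, hatOrlovTerm_eq, hatOrlovTerm_eq, mul_zpow_lie_mul_zpow hLMh,
    show 1 - p - (1 - q) = q - p by ring, show 1 - p + (1 - q) - 1 = 1 - (p + q) by ring]

lemma hatOrlovTerm_lie (hLMh : ⁅((L⁻¹ : Dˣ) : D), Mh⁆ = 1) (p : ℤ) :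
    ⁅hatOrlovTerm L Mh p, (L : D)⁆ = ↑(L ^ (p + 1)) := by
  have hL : (L : D) = ↑(L⁻¹ ^ (-1 : ℤ)) := by rw [zpow_neg_one, inv_inv]
  rw [hatOrlovTerm_eq, hL, mul_zpow_lie_zpow hLMh, neg_smul, one_smul, neg_neg, inv_zpow',
    show -(1 - p + -1 - 1) = p + 1 by ring]

variable [Algebra ℚ D]

def orlovTerm (n : ℕ) (P : Dˣ) (M : D) (p : ℤ) : D := (n : ℚ)⁻¹ • (M * ↑(P ^ ((n : ℤ) * p + 1)))

lemma orlovTerm_lie_orlovTerm (hn : n ≠ 0) (hPM : ⁅(P : D), M⁆ = 1) (p q : ℤ) :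
    ⁅orlovTerm n P M p, orlovTerm n P M q⁆ = (p - q) • orlovTerm n P M (p + q) := by
  rw [orlovTerm, orlovTerm, orlovTerm, smul_lie, lie_smul, mul_zpow_lie_mul_zpow hPM,
    show (n : ℤ) * p + 1 + ((n : ℤ) * q + 1) - 1 = n * (p + q) + 1 by ring,
    ← Int.cast_smul_eq_zsmul ℚ, ← Int.cast_smul_eq_zsmul ℚ, smul_smul, smul_smul, smul_smul]
  congr 1
  push_cast
  field_simp
  ring

lemma orlovTerm_lie (hn : n ≠ 0) (hPL : P ^ n = L) (hPM : ⁅(P : D), M⁆ = 1) (p : ℤ) :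
    ⁅orlovTerm n P M p, (L : D)⁆ = -↑(L ^ (p + 1)) := by
  have hL : (L : D) = ↑(P ^ (n : ℤ)) := by rw [zpow_natCast, hPL]
  rw [orlovTerm, smul_lie, hL, mul_zpow_lie_zpow hPM, ← Int.cast_smul_eq_zsmul ℚ, smul_neg,
    smul_smul, Int.cast_natCast, inv_mul_cancel₀ (by exact_mod_cast hn), one_smul,
    show (n : ℤ) * p + 1 + n - 1 = n * (p + 1) by ring, zpow_mul, zpow_natCast, hPL]

lemma orlovTerm_add_hatOrlovTerm_lie (hn : n ≠ 0) (hPL : P ^ n = L) (hPM : ⁅(P : D), M⁆ = 1)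
    (hLMh : ⁅((L⁻¹ : Dˣ) : D), Mh⁆ = 1) (p : ℤ) :
    ⁅orlovTerm n P M p + hatOrlovTerm L Mh p, (L : D)⁆ = 0 := by
  rw [add_lie, orlovTerm_lie hn hPL hPM, hatOrlovTerm_lie hLMh, neg_add_cancel]

lemma orlovTerm_lie_add_hatOrlovTerm_lie (hn : n ≠ 0) (hPM : ⁅(P : D), M⁆ = 1)
    (hLMh : ⁅((L⁻¹ : Dˣ) : D), Mh⁆ = 1) (p q : ℤ) :
    ⁅orlovTerm n P M q, orlovTerm n P M p⁆ + ⁅hatOrlovTerm L Mh p, hatOrlovTerm L Mh q⁆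
      = (q - p) • (orlovTerm n P M (p + q) + hatOrlovTerm L Mh (p + q)) := by
  rw [orlovTerm_lie_orlovTerm hn hPM, hatOrlovTerm_lie_hatOrlovTerm hLMh, add_comm q, smul_add]

end Virasoro

lemma lie_add_lie_sub_lie_add_lie {L : Type*} [LieRing L] {a₁ b₁ π₁ ν₁ a₂ b₂ π₂ ν₂ : L}
    (h₁ : π₁ + ν₁ = a₁ + b₁) (h₂ : π₂ + ν₂ = a₂ + b₂) :
    ⁅-ν₁, a₂⁆ + ⁅π₁, b₂⁆ - (⁅-ν₂, a₁⁆ + ⁅π₂, b₁⁆)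
      = ⁅a₂, a₁⁆ + ⁅b₁, b₂⁆ + ⁅π₁, π₂⁆ - ⁅ν₁, ν₂⁆ := by
  obtain rfl : ν₁ = a₁ + b₁ - π₁ := by rw [← h₁]; abel
  obtain rfl : ν₂ = a₂ + b₂ - π₂ := by rw [← h₂]; abel
  simp only [lie_add, lie_sub, add_lie, sub_lie, neg_lie]
  rw [← lie_skew a₂ a₁, ← lie_skew π₂ b₁, ← lie_skew b₂ a₁, ← lie_skew π₂ a₁]
  abel

lemma lie_neg_eq_lie_of_add_lie_eq_zero {L : Type*} [LieRing L] {π ν x : L}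
    (h : ⁅π + ν, x⁆ = 0) : ⁅-ν, x⁆ = ⁅π, x⁆ := by
  rw [neg_lie]
  exact neg_eq_of_add_eq_zero_right (by rw [← add_lie, add_comm, h])

section Splitting

variable {D : Type*} [Ring D]

structure IsRingSplitting (pos neg : D → D) : Prop where
  pos_add_neg : ∀ x, pos x + neg x = x
  map_add : ∀ x y, pos (x + y) = pos x + pos y
  pos_mul_pos : ∀ x y, pos (pos x * pos y) = pos x * pos y
  neg_mul_neg : ∀ x y, neg (neg x * neg y) = neg x * neg y

namespace IsRingSplitting

variable {pos neg : D → D} (hS : IsRingSplitting pos neg)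
include hS

lemma map_sub (x y : D) : pos (x - y) = pos x - pos y :=
  (AddMonoidHom.mk' pos hS.map_add).map_sub x y

lemma map_zsmul (m : ℤ) (x : D) : pos (m • x) = m • pos x :=
  (AddMonoidHom.mk' pos hS.map_add).map_zsmul m x

lemma pos_lie_pos (x y : D) : pos ⁅pos x, pos y⁆ = ⁅pos x, pos y⁆ := by
  rw [Ring.lie_def, hS.map_sub, hS.pos_mul_pos, hS.pos_mul_pos]

lemma pos_lie_neg (x y : D) : pos ⁅neg x, neg y⁆ = 0 := by
  have hmul : ∀ x y, pos (neg x * neg y) = 0 := fun x y => by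
    simpa [hS.neg_mul_neg] using hS.pos_add_neg (neg x * neg y)
  rw [Ring.lie_def, hS.map_sub, hmul, hmul, sub_zero]

lemma pos_lie_pos_sub_lie_neg (x y : D) :
    pos (⁅pos x, y⁆ - ⁅-neg y, x⁆) = ⁅pos x, pos y⁆ := by
  have h : ⁅pos x, y⁆ - ⁅-neg y, x⁆ = ⁅pos x, pos y⁆ - ⁅neg x, neg y⁆ := by
    rw [neg_lie, lie_skew]
    nth_rw 1 [← hS.pos_add_neg y]
    nth_rw 2 [← hS.pos_add_neg x]
    rw [lie_add, add_lie]
    abel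
  rw [h, hS.map_sub, hS.pos_lie_pos, hS.pos_lie_neg, sub_zero]

lemma pos_lie_add_lie_sub_lie_add_lie (a₁ b₁ a₂ b₂ : D) :
    pos (⁅-neg (a₁ + b₁), a₂⁆ + ⁅pos (a₁ + b₁), b₂⁆
        - (⁅-neg (a₂ + b₂), a₁⁆ + ⁅pos (a₂ + b₂), b₁⁆))
      = pos (⁅a₂, a₁⁆ + ⁅b₁, b₂⁆) + ⁅pos (a₁ + b₁), pos (a₂ + b₂)⁆ := by
  rw [lie_add_lie_sub_lie_add_lie (hS.pos_add_neg _) (hS.pos_add_neg _), hS.map_sub,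
    hS.map_add, hS.pos_lie_pos, hS.pos_lie_neg, sub_zero]

section Flows

variable {d₁ d₂ : D → D}
  (hd₁ : IsDerivation d₁) (hd₂ : IsDerivation d₂)
  (hd₁pos : ∀ x, d₁ (pos x) = pos (d₁ x)) (hd₂pos : ∀ x, d₂ (pos x) = pos (d₂ x))
include hd₁ hd₂ hd₁pos hd₂pos

lemma apply_apply_eq_of_lax {L X Y : D} (h₁ : d₁ L = ⁅pos X, L⁆) (h₂ : d₂ L = ⁅pos Y, L⁆)
    (h₁Y : d₁ Y = ⁅pos X, Y⁆) (h₂X : d₂ X = ⁅-neg Y, X⁆) : d₁ (d₂ L) = d₂ (d₁ L) := by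
  rw [← sub_eq_zero, hd₁.commutator_apply_of_lax hS.map_sub hd₂ hd₁pos hd₂pos h₁ h₂, h₁Y, h₂X,
    hS.pos_lie_pos_sub_lie_neg, sub_self, zero_lie]

lemma commutator_apply_eq_smul_of_lax {L a₁ b₁ a₂ b₂ S : D} {m : ℤ}
    (h₁ : d₁ L = ⁅pos (a₁ + b₁), L⁆) (h₂ : d₂ L = ⁅pos (a₂ + b₂), L⁆)
    (h₁₂ : d₁ (a₂ + b₂) = ⁅-neg (a₁ + b₁), a₂⁆ + ⁅pos (a₁ + b₁), b₂⁆)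
    (h₂₁ : d₂ (a₁ + b₁) = ⁅-neg (a₂ + b₂), a₁⁆ + ⁅pos (a₂ + b₂), b₁⁆)
    (hab : ⁅a₂, a₁⁆ + ⁅b₁, b₂⁆ = m • S) :
    d₁ (d₂ L) - d₂ (d₁ L) = m • ⁅pos S, L⁆ := by
  rw [hd₁.commutator_apply_of_lax hS.map_sub hd₂ hd₁pos hd₂pos h₁ h₂, h₁₂, h₂₁,
    hS.pos_lie_add_lie_sub_lie_add_lie, hab, hS.map_zsmul, add_sub_cancel_right, smul_lie]

end Flows

end IsRingSplitting

end Splitting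

section Dressing

variable {D : Type*} [Ring D] [Algebra ℚ D] {d : D → D} {n : ℕ} {Φ Φh del : Dˣ} {Ξ X1 : D}

lemma IsDerivation.dressing_lax (hd : IsDerivation d) {g h c ĉ : D} (hdel : d del = 0)
    (hΦ : d Φ = g * Φ) (hΦh : d Φh = h * Φh) (hc : Commute c del) (hĉ : Commute ĉ del)
    (hΞ : d Ξ = ⁅c, Ξ⁆) (hX1 : d X1 = ⁅ĉ, X1⁆) :
    (∀ m : ℤ, d ↑((Φ * del * Φ⁻¹) ^ m) = ⁅g + Φ * c * ↑Φ⁻¹, ↑((Φ * del * Φ⁻¹) ^ m)⁆) ∧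
    d ↑(Φh * del⁻¹ * Φh⁻¹) = ⁅h + Φh * ĉ * ↑Φh⁻¹, ↑(Φh * del⁻¹ * Φh⁻¹)⁆ ∧
    ∀ p, d (orlovTerm n (Φ * del * Φ⁻¹) (Φ * Ξ * ↑Φ⁻¹) p
        + hatOrlovTerm (Φh * del⁻¹ * Φh⁻¹) (Φh * X1 * ↑Φh⁻¹) p)
      = ⁅g + Φ * c * ↑Φ⁻¹, orlovTerm n (Φ * del * Φ⁻¹) (Φ * Ξ * ↑Φ⁻¹) p⁆
        + ⁅h + Φh * ĉ * ↑Φh⁻¹, hatOrlovTerm (Φh * del⁻¹ * Φh⁻¹) (Φh * X1 * ↑Φh⁻¹) p⁆ := by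
  have hdel_inv : d ↑del⁻¹ = 0 := by rw [hd.map_units_inv, hdel, mul_zero, zero_mul, neg_zero]
  refine ⟨hd.map_conj_zpow hΦ hdel hc, ?_, fun p => ?_⟩
  · simpa using hd.map_conj_zpow hΦh hdel_inv hĉ.units_inv_right 1
  · rw [hd.map_add, orlovTerm, hatOrlovTerm, hd.map_rat_smul,
      hd.map_mul_of_eq_lie (hd.map_conj hΦ hΞ) (hd.map_conj_zpow hΦ hdel hc _),
      hd.map_mul_of_eq_lie (hd.map_conj hΦh hX1) (hd.map_conj_zpow hΦh hdel_inv
        hĉ.units_inv_right _), lie_smul]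

lemma IsDerivation.dressing_lax_of_map_eq_zero (hd : IsDerivation d) {g h : D}
    (hdel : d del = 0) (hΦ : d Φ = g * Φ) (hΦh : d Φh = h * Φh) (hΞ : d Ξ = 0) (hX1 : d X1 = 0) :
    (∀ m : ℤ, d ↑((Φ * del * Φ⁻¹) ^ m) = ⁅g, ↑((Φ * del * Φ⁻¹) ^ m)⁆) ∧
    d ↑(Φh * del⁻¹ * Φh⁻¹) = ⁅h, ↑(Φh * del⁻¹ * Φh⁻¹)⁆ ∧
    ∀ p, d (orlovTerm n (Φ * del * Φ⁻¹) (Φ * Ξ * ↑Φ⁻¹) p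
        + hatOrlovTerm (Φh * del⁻¹ * Φh⁻¹) (Φh * X1 * ↑Φh⁻¹) p)
      = ⁅g, orlovTerm n (Φ * del * Φ⁻¹) (Φ * Ξ * ↑Φ⁻¹) p⁆
        + ⁅h, hatOrlovTerm (Φh * del⁻¹ * Φh⁻¹) (Φh * X1 * ↑Φh⁻¹) p⁆ := by
  simpa only [mul_zero, zero_mul, add_zero] using hd.dressing_lax (c := 0) (ĉ := 0) hdel hΦ hΦh
    (Commute.zero_left _) (Commute.zero_left _) (by rw [hΞ, zero_lie]) (by rw [hX1, zero_lie])

lemma IsDerivation.kp_flow_lax (hd : IsDerivation d) {pos neg : D → D}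
    (hsplit : ∀ x, pos x + neg x = x) (hΞ_del : ⁅(del : D), Ξ⁆ = 1) (hX1_del : ⁅(del : D), X1⁆ = 1)
    {k : ℕ} (hdel : d del = 0) (hΞ : d Ξ = (k : ℤ) • ↑(del ^ ((k : ℤ) - 1)))
    (hX1 : d X1 = if k = 1 then 1 else 0) (hΦ : d Φ = -neg ↑((Φ * del * Φ⁻¹) ^ k) * Φ)
    (hΦh : d Φh = (pos ↑((Φ * del * Φ⁻¹) ^ k)
      - if k = 1 then ↑(Φh * del⁻¹ * Φh⁻¹)⁻¹ else 0) * Φh) :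
    d ↑(Φh * del⁻¹ * Φh⁻¹) = ⁅pos ↑((Φ * del * Φ⁻¹) ^ k), ↑(Φh * del⁻¹ * Φh⁻¹)⁆ ∧
    ∀ p, d (orlovTerm n (Φ * del * Φ⁻¹) (Φ * Ξ * ↑Φ⁻¹) p
        + hatOrlovTerm (Φh * del⁻¹ * Φh⁻¹) (Φh * X1 * ↑Φh⁻¹) p)
      = ⁅pos ↑((Φ * del * Φ⁻¹) ^ k), orlovTerm n (Φ * del * Φ⁻¹) (Φ * Ξ * ↑Φ⁻¹) p
        + hatOrlovTerm (Φh * del⁻¹ * Φh⁻¹) (Φh * X1 * ↑Φh⁻¹) p⁆ := by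
  -- The term `-L⁻¹` in the `t₁`-flow of `Φ̂` is the dressing of `ĉ = ∂`, which generates
  -- `∂x/∂t₁ = 1`.
  set ĉ : D := if k = 1 then ↑del else 0 with hĉ_def
  have hG : -neg ↑((Φ * del * Φ⁻¹) ^ k) + ↑Φ * ↑(del ^ k) * ↑Φ⁻¹
      = pos (↑((Φ * del * Φ⁻¹) ^ k) : D) := by
    rw [← Units.val_mul, ← Units.val_mul, ← conj_pow, neg_add_eq_sub, eq_comm,
      eq_sub_iff_add_eq, hsplit]
  have hĜ : (pos ↑((Φ * del * Φ⁻¹) ^ k) - if k = 1 then ↑(Φh * del⁻¹ * Φh⁻¹)⁻¹ else 0)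
      + ↑Φh * ĉ * ↑Φh⁻¹ = pos (↑((Φ * del * Φ⁻¹) ^ k) : D) := by
    rw [hĉ_def, conj_inv, inv_inv]
    split_ifs <;> simp
  have hĉ : Commute ĉ del := by
    rw [hĉ_def]
    split_ifs
    exacts [Commute.refl _, Commute.zero_left _]
  have hΞ' : d Ξ = ⁅(↑(del ^ k) : D), Ξ⁆ := by
    rw [hΞ, ← zpow_natCast, lie_zpow_of_lie_eq_one hΞ_del]
  have hX1' : d X1 = ⁅ĉ, X1⁆ := by
    rw [hX1, hĉ_def]
    split_ifs
    exacts [hX1_del.symm, (zero_lie X1).symm]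
  obtain ⟨-, hL, hA⟩ := hd.dressing_lax (n := n) hdel hΦ hΦh
    ((Commute.refl del).pow_left k).units_val hĉ hΞ' hX1'
  rw [hĜ] at hL hA
  rw [hG] at hA
  exact ⟨hL, fun p => (hA p).trans (lie_add _ _ _).symm⟩

end Dressing

end

theorem stmt_18_general {D : Type*} [Ring D] [Algebra ℚ D]
    (pos neg : D → D)
    (hsplit : ∀ x, pos x + neg x = x)
    (hpos_add : ∀ x y, pos (x + y) = pos x + pos y)
    (hpos_mul : ∀ x y, pos (pos x * pos y) = pos x * pos y)
    (hneg_mul : ∀ x y, neg (neg x * neg y) = neg x * neg y)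
    (del Φ Φh : Dˣ)
    -- the constraint Φ∂ⁿΦ⁻¹ = Φ̂∂⁻¹Φ̂⁻¹ (a fixed positive integer n)
    (n : ℕ) (hn : 1 ≤ n)
    (hcon : Φ * del ^ n * Φ⁻¹ = Φh * del⁻¹ * Φh⁻¹)
    -- Ξ = Σ k t_k ∂^{k−1} and x (the latter entering M̂ = Φ̂xΦ̂⁻¹)
    (Ξ X1 : D)
    (hΞ_del : (del : D) * Ξ - Ξ * (del : D) = 1)
    (hX1_del : (del : D) * X1 - X1 * (del : D) = 1)
    -- the hierarchy flows
    (T : ℕ → D → D)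
    (hT_add : ∀ k x y, T k (x + y) = T k x + T k y)
    (hT_mul : ∀ k x y, T k (x * y) = T k x * y + x * T k y)
    (hT_pos : ∀ k x, T k (pos x) = pos (T k x))
    (hT_del : ∀ k, T k (del : D) = 0)
    (hΞ_T : ∀ k : ℕ, 1 ≤ k →
      T k Ξ = (k : ℤ) • ((del ^ ((k : ℤ) - 1) : Dˣ) : D))
    (hX1_T : ∀ k : ℕ, 1 ≤ k → T k X1 = if k = 1 then 1 else 0)
    -- the Virasoro flows ∂/∂s_p
    (s : ℤ → D → D)
    (hs_add : ∀ p x y, s p (x + y) = s p x + s p y)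
    (hs_mul : ∀ p x y, s p (x * y) = s p x * y + x * s p y)
    (hs_pos : ∀ p x, s p (pos x) = pos (s p x))
    (hs_del : ∀ p, s p (del : D) = 0)
    (hs_Ξ : ∀ p, s p Ξ = 0) (hs_X1 : ∀ p, s p X1 = 0) :
    let P : Dˣ := Φ * del * Φ⁻¹
    let L : Dˣ := Φh * del⁻¹ * Φh⁻¹
    let M : D := (Φ : D) * Ξ * ((Φ⁻¹ : Dˣ) : D)
    let Mh : D := (Φh : D) * X1 * ((Φh⁻¹ : Dˣ) : D)
    let Sp : ℤ → D := fun p =>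
      (n : ℚ)⁻¹ • (M * ((P ^ ((n : ℤ) * p + 1) : Dˣ) : D))
        + Mh * ((L ^ (p - 1) : Dˣ) : D)
    -- the flows of the cKP hierarchy:
    (∀ k : ℕ, 1 ≤ k →
      T k (Φ : D) = -(neg ((P ^ k : Dˣ) : D)) * (Φ : D)) →
    (∀ k : ℕ, 1 ≤ k →
      T k (Φh : D)
        = (pos ((P ^ k : Dˣ) : D) - (if k = 1 then ((L⁻¹ : Dˣ) : D) else 0))
            * (Φh : D)) →
    -- the Virasoro flows of the dressing operators (p ≥ −1):
    (∀ p : ℤ, -1 ≤ p → s p (Φ : D) = -(neg (Sp p)) * (Φ : D)) →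
    (∀ p : ℤ, -1 ≤ p → s p (Φh : D) = pos (Sp p) * (Φh : D)) →
    -- conclusions:
    ((∀ p : ℤ, -1 ≤ p →
       -- [S_p, L] = 0: consistency with the constraint
       Sp p * (L : D) - (L : D) * Sp p = 0 ∧
       -- the induced flow on L: ∂L/∂s_p = [−(S_p)₋, L] = [(S_p)₊, L]
       s p (L : D) = -(neg (Sp p)) * (L : D) - (L : D) * -(neg (Sp p)) ∧
       s p (L : D) = pos (Sp p) * (L : D) - (L : D) * pos (Sp p)) ∧
     -- (i) the Virasoro flows are symmetries of the cKP hierarchy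
     (∀ (k : ℕ) (p : ℤ), 1 ≤ k → -1 ≤ p →
       T k (s p (L : D)) = s p (T k (L : D))) ∧
     -- (ii) the Virasoro commutation relations
     (∀ p q : ℤ, -1 ≤ p → -1 ≤ q →
       s p (s q (L : D)) - s q (s p (L : D)) = (q - p) • s (p + q) (L : D))) := by
  intro P L M Mh Sp hTΦ hTΦh hsΦ hsΦh
  let _ : LieRing D := LieRing.ofAssociativeRing
  have hS : IsRingSplitting pos neg := ⟨hsplit, hpos_add, hpos_mul, hneg_mul⟩
  have hTd (k : ℕ) : IsDerivation (T k) := ⟨hT_add k, hT_mul k⟩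
  have hsd (p : ℤ) : IsDerivation (s p) := ⟨hs_add p, hs_mul p⟩
  have hn0 : n ≠ 0 := by omega
  have hPL : P ^ n = L := by rw [conj_pow, hcon]
  have hPM : ⁅(P : D), M⁆ = 1 := lie_conj_eq_one hΞ_del Φ
  have hLMh : ⁅((L⁻¹ : Dˣ) : D), Mh⁆ = 1 := by
    rw [conj_inv, inv_inv]
    exact lie_conj_eq_one hX1_del Φh
  have hT (k : ℕ) (hk : 1 ≤ k) :
      T k (L : D) = ⁅pos ↑(P ^ k), (L : D)⁆ ∧ ∀ p, T k (Sp p) = ⁅pos ↑(P ^ k), Sp p⁆ :=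
    (hTd k).kp_flow_lax hsplit hΞ_del hX1_del (hT_del k) (hΞ_T k hk) (hX1_T k hk) (hTΦ k hk)
      (hTΦh k hk)
  have hs (p : ℤ) (hp : -1 ≤ p) : (∀ m : ℤ, s p ↑(P ^ m) = ⁅-neg (Sp p), ↑(P ^ m)⁆) ∧
      s p (L : D) = ⁅pos (Sp p), (L : D)⁆ ∧
      ∀ q, s p (Sp q) = ⁅-neg (Sp p), orlovTerm n P M q⁆ + ⁅pos (Sp p), hatOrlovTerm L Mh q⁆ :=
    (hsd p).dressing_lax_of_map_eq_zero (hs_del p) (hsΦ p hp) (hsΦh p hp) (hs_Ξ p) (hs_X1 p)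
  refine ⟨fun p hp => ?_, fun k p hk hp => ?_, fun p q hp hq => ?_⟩
  · have hSL : ⁅Sp p, (L : D)⁆ = 0 := orlovTerm_add_hatOrlovTerm_lie hn0 hPL hPM hLMh p
    refine ⟨hSL, (hs p hp).2.1.trans ?_, (hs p hp).2.1⟩
    exact (lie_neg_eq_lie_of_add_lie_eq_zero (by rw [hsplit]; exact hSL)).symm
  · refine hS.apply_apply_eq_of_lax (hTd k) (hsd p) (hT_pos k) (hs_pos p) (hT k hk).1
      (hs p hp).2.1 ((hT k hk).2 p) ?_
    rw [← zpow_natCast]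
    exact (hs p hp).1 k
  · by_cases hpq : -1 ≤ p + q
    · rw [(hs (p + q) hpq).2.1]
      exact hS.commutator_apply_eq_smul_of_lax (hsd p) (hsd q) (hs_pos p) (hs_pos q)
        (hs p hp).2.1 (hs q hq).2.1 ((hs p hp).2.2 q) ((hs q hq).2.2 p)
        (orlovTerm_lie_add_hatOrlovTerm_lie hn0 hPM hLMh p q)
    · obtain ⟨rfl, rfl⟩ : p = -1 ∧ q = -1 := by omega
      simp

theorem stmt_18 {D : Type*} [Ring D] [Algebra ℚ D]
    (pos neg : D → D)
    (hsplit : ∀ x, pos x + neg x = x)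
    (hpos_add : ∀ x y, pos (x + y) = pos x + pos y)
    (hpos_smul : ∀ (c : ℚ) x, pos (c • x) = c • pos x)
    (hpos_idem : ∀ x, pos (pos x) = pos x)
    (hpos_mul : ∀ x y, pos (pos x * pos y) = pos x * pos y)
    (hneg_mul : ∀ x y, neg (neg x * neg y) = neg x * neg y)
    (hpos_one : pos 1 = 1)
    (del Φ Φh : Dˣ)
    (hdel_pos : pos (del : D) = (del : D))
    -- the constraint Φ∂ⁿΦ⁻¹ = Φ̂∂⁻¹Φ̂⁻¹ (a fixed positive integer n)
    (n : ℕ) (hn : 1 ≤ n)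
    (hcon : Φ * del ^ n * Φ⁻¹ = Φh * del⁻¹ * Φh⁻¹)
    -- Ξ = Σ k t_k ∂^{k−1} and x (the latter entering M̂ = Φ̂xΦ̂⁻¹)
    (Ξ X1 : D)
    (hΞ_del : (del : D) * Ξ - Ξ * (del : D) = 1)
    (hX1_del : (del : D) * X1 - X1 * (del : D) = 1)
    -- the hierarchy flows
    (T : ℕ → D → D)
    (hT_add : ∀ k x y, T k (x + y) = T k x + T k y)
    (hT_mul : ∀ k x y, T k (x * y) = T k x * y + x * T k y)
    (hT_smul : ∀ k (c : ℚ) x, T k (c • x) = c • T k x)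
    (hT_pos : ∀ k x, T k (pos x) = pos (T k x))
    (hT_del : ∀ k, T k (del : D) = 0)
    (hΞ_T : ∀ k : ℕ, 1 ≤ k →
      T k Ξ = (k : ℤ) • ((del ^ ((k : ℤ) - 1) : Dˣ) : D))
    (hX1_T : ∀ k : ℕ, 1 ≤ k → T k X1 = if k = 1 then 1 else 0)
    -- the Virasoro flows ∂/∂s_p
    (s : ℤ → D → D)
    (hs_add : ∀ p x y, s p (x + y) = s p x + s p y)
    (hs_mul : ∀ p x y, s p (x * y) = s p x * y + x * s p y)
    (hs_smul : ∀ p (c : ℚ) x, s p (c • x) = c • s p x)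
    (hs_pos : ∀ p x, s p (pos x) = pos (s p x))
    (hs_del : ∀ p, s p (del : D) = 0)
    (hs_Ξ : ∀ p, s p Ξ = 0) (hs_X1 : ∀ p, s p X1 = 0) :
    let P : Dˣ := Φ * del * Φ⁻¹
    let L : Dˣ := Φh * del⁻¹ * Φh⁻¹
    let M : D := (Φ : D) * Ξ * ((Φ⁻¹ : Dˣ) : D)
    let Mh : D := (Φh : D) * X1 * ((Φh⁻¹ : Dˣ) : D)
    let Sp : ℤ → D := fun p =>
      (n : ℚ)⁻¹ • (M * ((P ^ ((n : ℤ) * p + 1) : Dˣ) : D))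
        + Mh * ((L ^ (p - 1) : Dˣ) : D)
    -- the flows of the cKP hierarchy:
    (∀ k : ℕ, 1 ≤ k →
      T k (Φ : D) = -(neg ((P ^ k : Dˣ) : D)) * (Φ : D)) →
    (∀ k : ℕ, 1 ≤ k →
      T k (Φh : D)
        = (pos ((P ^ k : Dˣ) : D) - (if k = 1 then ((L⁻¹ : Dˣ) : D) else 0))
            * (Φh : D)) →
    -- the Virasoro flows of the dressing operators (p ≥ −1):
    (∀ p : ℤ, -1 ≤ p → s p (Φ : D) = -(neg (Sp p)) * (Φ : D)) →
    (∀ p : ℤ, -1 ≤ p → s p (Φh : D) = pos (Sp p) * (Φh : D)) →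
    -- conclusions:
    ((∀ p : ℤ, -1 ≤ p →
       -- [S_p, L] = 0: consistency with the constraint
       Sp p * (L : D) - (L : D) * Sp p = 0 ∧
       -- the induced flow on L: ∂L/∂s_p = [−(S_p)₋, L] = [(S_p)₊, L]
       s p (L : D) = -(neg (Sp p)) * (L : D) - (L : D) * -(neg (Sp p)) ∧
       s p (L : D) = pos (Sp p) * (L : D) - (L : D) * pos (Sp p)) ∧
     -- (i) the Virasoro flows are symmetries of the cKP hierarchy
     (∀ (k : ℕ) (p : ℤ), 1 ≤ k → -1 ≤ p →
       T k (s p (L : D)) = s p (T k (L : D))) ∧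
     -- (ii) the Virasoro commutation relations
     (∀ p q : ℤ, -1 ≤ p → -1 ≤ q →
       s p (s q (L : D)) - s q (s p (L : D)) = (q - p) • s (p + q) (L : D))) :=
  stmt_18_general pos neg hsplit hpos_add hpos_mul hneg_mul del Φ Φh n hn hcon Ξ X1 hΞ_del hX1_del T
    hT_add hT_mul hT_pos hT_del hΞ_T hX1_T s hs_add hs_mul hs_pos hs_del hs_Ξ hs_X1
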